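/- arXiv:1512.05706 — 2 statements merged into one kernel-verified Lean document; each statement's English description precedes it below -/
import Mathlib

section
/- Let Ω ⊂ ℝ^n be a bounded open set, let μ be a positive finite Radon measure on Ω, and suppose there exists a nonempty open ball B ⊆ Ω with μ(B) = 0. Then every v ∈ W^{1,1}_μ(Ω) satisfies |Dv|(B) = 0 and is hence ℒ^n-a.e. constant on B. Consequently, for any nonconstant u ∈ C^1_c(B) (extended by zero to Ω), there exists no sequence (u_j) ⊆ W^{1,1}_μ(Ω) with u_j → u in L^1(Ω), and therefore F_*(u,Ω) = +∞ for any integrand F. -/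
open MeasureTheory Filter Topology Metric Set

noncomputable section

/-- Euclidean space `ℝ^n`. -/
abbrev Rn (n : ℕ) := EuclideanSpace ℝ (Fin n)
/-- Euclidean space `ℝ^N` (the target space). -/
abbrev RNs (N : ℕ) := EuclideanSpace ℝ (Fin N)
/-- The matrix space `ℝ^{N×n}` with the Euclidean (Frobenius) norm. -/
abbrev Mat (N n : ℕ) := EuclideanSpace ℝ (Fin N × Fin n)

/-- The tensor product `a ⊗ b = a bᵀ ∈ ℝ^{N×n}`. -/
def tens {N n : ℕ} (a : RNs N) (b : Rn n) : Mat N n :=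
  (WithLp.equiv 2 _).symm (fun p : Fin N × Fin n => a p.1 * b p.2)

/-- A finite `E`-valued (Radon) measure on `ℝ^n`, represented by a positive base measure
together with an integrable density, so that the measure of a set `A` is `∫_A dens d(base)`. -/
structure VMeas (n : ℕ) (E : Type*) [NormedAddCommGroup E] [NormedSpace ℝ E] where
  base : Measure (Rn n)
  dens : Rn n → E
  integrable : Integrable dens base

namespace VMeas

variable {n : ℕ} {E : Type*} [NormedAddCommGroup E] [NormedSpace ℝ E]

/-- The value of the vector measure on a set. -/
def app (γ : VMeas n E) (A : Set (Rn n)) : E := ∫ x in A, γ.dens x ∂γ.base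

/-- The total variation measure `|γ|`. -/
def tv (γ : VMeas n E) : Measure (Rn n) :=
  γ.base.withDensity fun x => (‖γ.dens x‖₊ : ENNReal)

end VMeas

/-- `u ∈ BV(Ω; ℝ^N)` with derivative measure `Du`: `u` is integrable on `Ω`, `Du` is a finite
matrix-valued measure concentrated on `Ω`, and the integration-by-parts formula holds. -/
def IsBV {n N : ℕ} (Ω : Set (Rn n)) (u : Rn n → RNs N) (Du : VMeas n (Mat N n)) : Prop :=
  IntegrableOn u Ω volume ∧ Du.tv Ωᶜ = 0 ∧
  ∀ ψ : Rn n → ℝ, ContDiff ℝ 1 ψ → HasCompactSupport ψ → tsupport ψ ⊆ Ω →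
    ∀ (i : Fin N) (j : Fin n),
      ∫ x in Ω, fderiv ℝ ψ x (EuclideanSpace.single j (1:ℝ)) * u x i ∂volume
        = - ∫ x, ψ x * Du.dens x (i, j) ∂Du.base

/-- The Radon–Nikodym decomposition `γ = g μ + σ` of a vector measure `γ` with respect to a
positive measure `μ`: `σ` is the singular part, whose base measure is its total variation
(i.e. its density has norm one a.e.) and is mutually singular with `μ`. -/
def IsDecomp {n : ℕ} {E : Type*} [NormedAddCommGroup E] [NormedSpace ℝ E]
    (γ : VMeas n E) (μ : Measure (Rn n)) (g : Rn n → E) (σ : VMeas n E) : Prop :=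
  Integrable g μ ∧ σ.base.MutuallySingular μ ∧ (∀ᵐ x ∂σ.base, ‖σ.dens x‖ = 1) ∧
  ∀ A : Set (Rn n), MeasurableSet A → γ.app A = (∫ x in A, g x ∂μ) + σ.app A

/-- The matrix of partial derivatives `(∂ψ^i/∂x_j)` of a map `ψ : ℝ^n → ℝ^N` at a point. -/
def gradMat {N n : ℕ} (ψ : Rn n → RNs N) (x : Rn n) : Mat N n :=
  (WithLp.equiv 2 _).symm
    (fun p : Fin N × Fin n => fderiv ℝ ψ x (EuclideanSpace.single p.2 (1:ℝ)) p.1)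

/-- Quasiconvexity of `F : ℝ^{N×n} → ℝ`, tested (as one equivalently may) on the unit ball as
the Lipschitz domain, against Lipschitz test maps vanishing outside the ball (`W_0^{1,∞}`). -/
def QuasiconvexFn {N n : ℕ} (F : Mat N n → ℝ) : Prop :=
  ∀ (A : Mat N n) (ψ : Rn n → RNs N) (C : NNReal), LipschitzWith C ψ →
    (∀ x ∉ Metric.ball (0 : Rn n) 1, ψ x = 0) →
    (volume (Metric.ball (0 : Rn n) 1)).toReal * F A ≤
      ∫ x in Metric.ball (0 : Rn n) 1, F (A + gradMat ψ x) ∂volume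

/-- `Fi` is the recession function of `F`: `Fi A = lim_{A'→A, t→∞} F(tA')/t`. -/
def HasRecession {E : Type*} [NormedAddCommGroup E] [NormedSpace ℝ E]
    (F Fi : E → ℝ) : Prop :=
  ∀ A : E, Tendsto (fun p : E × ℝ => F (p.2 • p.1) / p.2) ((𝓝 A) ×ˢ atTop) (𝓝 (Fi A))

/-- The generalized recession function `F^#(A) = limsup_{A'→A, t→∞} F(tA')/t`. -/
def recSharp {E : Type*} [NormedAddCommGroup E] [NormedSpace ℝ E] (F : E → ℝ) (A : E) : ℝ :=
  limsup (fun p : E × ℝ => F (p.2 • p.1) / p.2) ((𝓝 A) ×ˢ atTop)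

/-- The relaxed functional `F_*(u, Ω)` with respect to `μ`: the infimum (in `[0,∞]`, so `+∞` if
there is no admissible sequence) over all sequences `v_j ∈ W^{1,1}_μ(Ω;ℝ^N)` (i.e. BV functions
whose derivative measure is `g_j μ`) converging to `u` in `L^1(Ω;ℝ^N)`, of
`liminf_j ∫_Ω F(dDv_j/dμ) dμ`. -/
def relaxed {n N : ℕ} (Ω : Set (Rn n)) (μ : Measure (Rn n)) (F : Mat N n → ℝ)
    (u : Rn n → RNs N) : ENNReal :=
  ⨅ (v : ℕ → Rn n → RNs N) (g : ℕ → Rn n → Mat N n)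
    (_ : ∀ j, ∃ h : Integrable (g j) μ, IsBV Ω (v j) ⟨μ, g j, h⟩)
    (_ : Tendsto (fun j => ∫ x in Ω, ‖v j x - u x‖ ∂volume) atTop (𝓝 0)),
    liminf (fun j => ENNReal.ofReal (∫ x in Ω, F (g j x) ∂μ)) atTop

/-- `g` is the bounded continuous extension of the transform `Tf` to `cl(Ω) × cl(𝔹)`, where
`(Tf)(x,Â) = (1-|Â|) f(x, Â/(1-|Â|))`. -/
def IsTExtension {n : ℕ} {E : Type*} [NormedAddCommGroup E] [NormedSpace ℝ E]
    (Ω : Set (Rn n)) (f g : Rn n × E → ℝ) : Prop :=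
  ContinuousOn g (closure Ω ×ˢ Metric.closedBall (0 : E) 1) ∧
  (∃ M : ℝ, ∀ p ∈ closure Ω ×ˢ Metric.closedBall (0 : E) 1, |g p| ≤ M) ∧
  ∀ x ∈ Ω, ∀ A ∈ Metric.ball (0 : E) 1, g (x, A) = (1 - ‖A‖) * f (x, (1 - ‖A‖)⁻¹ • A)

/-- The class `E(Ω; E)` of integrands: continuous functions on `Ω × E` whose transform `Tf`
extends to a bounded continuous function on `cl(Ω × 𝔹)`. -/
def MemE {n : ℕ} {E : Type*} [NormedAddCommGroup E] [NormedSpace ℝ E]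
    (Ω : Set (Rn n)) (f : Rn n × E → ℝ) : Prop :=
  ContinuousOn f (Ω ×ˢ (Set.univ : Set E)) ∧ ∃ g, IsTExtension Ω f g

/-- `fi` is the recession function of the `x`-dependent integrand `f`: for every `x ∈ cl(Ω)`
and every `A`, `f(x', tA')/t → fi(x,A)` as `x' → x` (within `Ω`), `A' → A` and `t → ∞`. -/
def IsRecessionOn {n : ℕ} {E : Type*} [NormedAddCommGroup E] [NormedSpace ℝ E]
    (Ω : Set (Rn n)) (f fi : Rn n × E → ℝ) : Prop :=
  ∀ x ∈ closure Ω, ∀ A : E,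
    Tendsto (fun q : (Rn n × E) × ℝ => f (q.1.1, q.2 • q.1.2) / q.2)
      (((𝓝[Ω] x) ×ˢ (𝓝 A)) ×ˢ atTop) (𝓝 (fi (x, A)))

/-- A generalized Young measure `ν = (ν_x, λ_ν, ν_x^∞) ∈ Y(Ω, μ; E)`: a weakly* `μ`-measurable
family `(ν_x)` of probability measures on `E` with `x ↦ ∫ |A| dν_x ∈ L^1(μ)`, a positive finite
measure `λ_ν` on `cl(Ω)`, and a weakly* `λ_ν`-measurable family `(ν_x^∞)` of probability
measures carried by the unit sphere of `E`. -/
structure Young (n : ℕ) (E : Type*) [NormedAddCommGroup E] [NormedSpace ℝ E]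
    [MeasurableSpace E] (Ω : Set (Rn n)) (μ : Measure (Rn n)) where
  osc : Rn n → Measure E
  osc_prob : ∀ x, IsProbabilityMeasure (osc x)
  osc_meas : ∀ B : Set E, MeasurableSet B → AEMeasurable (fun x => (osc x B).toReal) μ
  osc_int : Integrable (fun x => ∫ A, ‖A‖ ∂osc x) μ
  lam : Measure (Rn n)
  lam_fin : IsFiniteMeasure lam
  lam_supp : lam (closure Ω)ᶜ = 0
  jet : Rn n → Measure E
  jet_prob : ∀ x, IsProbabilityMeasure (jet x)
  jet_meas : ∀ B : Set E, MeasurableSet B → AEMeasurable (fun x => (jet x B).toReal) lam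
  jet_sphere : ∀ x, jet x {A : E | ‖A‖ = 1}ᶜ = 0

/-- The duality pairing `⟨⟨f, ν⟩⟩` of an integrand `f` (with recession function `fi`) with a
generalized Young measure `ν`. -/
def Young.pair {n : ℕ} {E : Type*} [NormedAddCommGroup E] [NormedSpace ℝ E]
    [MeasurableSpace E] {Ω : Set (Rn n)} {μ : Measure (Rn n)}
    (ν : Young n E Ω μ) (f fi : Rn n × E → ℝ) : ℝ :=
  (∫ x in Ω, ∫ A, f (x, A) ∂ν.osc x ∂μ) + ∫ x, ∫ A, fi (x, A) ∂ν.jet x ∂ν.lam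

/-- The pairing `⟨⟨f, ε_γ⟩⟩` of an integrand with the elementary Young measure associated to a
vector measure `γ` with Radon–Nikodym decomposition `γ = g μ + σ` with respect to `μ`. -/
def elemPair {n : ℕ} {E : Type*} [NormedAddCommGroup E] [NormedSpace ℝ E]
    (Ω : Set (Rn n)) (μ : Measure (Rn n)) (g : Rn n → E) (σ : VMeas n E)
    (f fi : Rn n × E → ℝ) : ℝ :=
  (∫ x in Ω, f (x, g x) ∂μ) + ∫ x, fi (x, σ.dens x) ∂σ.base

/-- The sequence of vector measures `γ_j` (with decompositions `γ_j = g_j μ + σ_j` w.r.t. `μ`)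
generates the generalized Young measure `ν`: `⟨⟨f, ε_{γ_j}⟩⟩ → ⟨⟨f, ν⟩⟩` for all `f ∈ E(Ω;E)`. -/
def Generates {n : ℕ} {E : Type*} [NormedAddCommGroup E] [NormedSpace ℝ E] [MeasurableSpace E]
    (Ω : Set (Rn n)) (μ : Measure (Rn n)) (g : ℕ → Rn n → E) (σ : ℕ → VMeas n E)
    (ν : Young n E Ω μ) : Prop :=
  ∀ f fi : Rn n × E → ℝ, MemE Ω f → IsRecessionOn Ω f fi →
    Tendsto (fun j => elemPair Ω μ (g j) (σ j) f fi) atTop (𝓝 (ν.pair f fi))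

/-- `ν` is a gradient Young measure (w.r.t. `μ`): it is generated by the derivatives of a
norm-bounded sequence in `BV(Ω;ℝ^N)`. -/
def IsGradientYM {n N : ℕ} (Ω : Set (Rn n)) (μ : Measure (Rn n))
    (ν : Young n (Mat N n) Ω μ) : Prop :=
  ∃ (u : ℕ → Rn n → RNs N) (Du : ℕ → VMeas n (Mat N n))
    (g : ℕ → Rn n → Mat N n) (σ : ℕ → VMeas n (Mat N n)),
    (∀ j, IsBV Ω (u j) (Du j)) ∧ (∀ j, IsDecomp (Du j) μ (g j) (σ j)) ∧
    (∃ C : ℝ, ∀ j, (∫ x in Ω, ‖u j x‖ ∂volume) + ((Du j).tv Set.univ).toReal ≤ C) ∧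
    Generates Ω μ g σ ν

/-- The barycenter of the Young measure `ν`, restricted to `Ω`, is the vector measure `Du`. -/
def HasBarycenter {n N : ℕ} (Ω : Set (Rn n)) (μ : Measure (Rn n))
    (ν : Young n (Mat N n) Ω μ) (Du : VMeas n (Mat N n)) : Prop :=
  ∀ A : Set (Rn n), MeasurableSet A → A ⊆ Ω →
    ((∫ x in A, (∫ B, B ∂ν.osc x) ∂μ) + ∫ x in A, (∫ B, B ∂ν.jet x) ∂ν.lam) = Du.app A

/-- `Ω` is a bounded Lipschitz domain: it is open, bounded, and near every boundary point it is
the region above the graph of a Lipschitz function over a hyperplane. -/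
def IsLipschitzDomain {n : ℕ} (Ω : Set (Rn n)) : Prop :=
  IsOpen Ω ∧ Bornology.IsBounded Ω ∧
  ∀ x ∈ frontier Ω, ∃ (v : Rn n) (L : NNReal) (ρ : ℝ) (φ : Rn n → ℝ),
    ‖v‖ = 1 ∧ 0 < ρ ∧ LipschitzWith L φ ∧ φ 0 = 0 ∧
    ∀ z ∈ Metric.ball x ρ,
      (z ∈ Ω ↔ φ (z - x - (inner ℝ (z - x) v : ℝ) • v) < (inner ℝ (z - x) v : ℝ))

/-- Membership in `C_0(Ω)`: continuous on `Ω` and arbitrarily small outside compact subsets. -/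
def MemC0 {n : ℕ} (Ω : Set (Rn n)) (φ : Rn n → ℝ) : Prop :=
  ContinuousOn φ Ω ∧ ∀ ε > 0, ∃ K : Set (Rn n), K ⊆ Ω ∧ IsCompact K ∧
    ∀ x ∈ Ω \ K, |φ x| < ε

/-- `Tu` is the boundary trace of `u ∈ BV(Ω;ℝ^N)` (with inner boundary normal `nor`): the zero
extension of `u` to `ℝ^n` is of bounded variation with derivative
`Du + (Tu ⊗ nor) H^{n-1}⌞∂Ω`, expressed via integration by parts. -/
def HasTrace {n N : ℕ} (Ω : Set (Rn n)) (u : Rn n → RNs N) (Du : VMeas n (Mat N n))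
    (Tu : Rn n → RNs N) (nor : Rn n → Rn n) : Prop :=
  Integrable Tu ((μH[(n:ℝ) - 1] : Measure (Rn n)).restrict (frontier Ω)) ∧
  ∀ ψ : Rn n → ℝ, ContDiff ℝ 1 ψ → HasCompactSupport ψ →
    ∀ (i : Fin N) (j : Fin n),
      ∫ x in Ω, fderiv ℝ ψ x (EuclideanSpace.single j (1:ℝ)) * u x i ∂volume
        = - (∫ x, ψ x * Du.dens x (i, j) ∂Du.base)
          - ∫ x in frontier Ω, ψ x * (Tu x i * nor x j) ∂(μH[(n:ℝ) - 1] : Measure (Rn n))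

open scoped Classical in
/-- The Dirichlet class `BV_u(Ω;ℝ^N)`: `v` such that `w = (v - u) 1_Ω ∈ BV(ℝ^n;ℝ^N)` with
`|Dw|(∂Ω) = 0`. -/
def MemDirichlet {n N : ℕ} (Ω : Set (Rn n)) (u v : Rn n → RNs N) : Prop :=
  ∃ Dw : VMeas n (Mat N n),
    IsBV Set.univ (fun x => if x ∈ Ω then v x - u x else 0) Dw ∧ Dw.tv (frontier Ω) = 0

/-- The area measure `⟨γ⟩` of a vector measure with decomposition `γ = a ℒ^n⌞Ω + γ^s`:
`⟨γ⟩(A) = ∫_A √(1+|a|²) dℒ^n + |γ^s|(A)`. -/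
def areaMeasure {n : ℕ} {E : Type*} [NormedAddCommGroup E] [NormedSpace ℝ E]
    (Ω : Set (Rn n)) (a : Rn n → E) (σ : VMeas n E) : Measure (Rn n) :=
  (volume.restrict Ω).withDensity (fun x => ENNReal.ofReal (Real.sqrt (1 + ‖a x‖ ^ 2))) + σ.base

/-!
Since `Dv = g μ` and `μ(B) = 0`, integration by parts against test functions supported in `B`
shows that (the zero extension of) each component of `v` has vanishing weak gradient on `B`.
Its mollifications then have zero derivative, hence are constant, on slightly smaller balls, and
they converge to it a.e. by the Lebesgue differentiation theorem; so `v` is a.e. constant on `B`.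
If functions `v_j`, a.e. equal to constants `c_j` on `B`, converge in `L¹` to a function `u`
continuous on `B`, then `c_j → u x` for every `x ∈ B`, so `u` is constant on `B`. Hence a
nonconstant `u` has no approximating sequence and `F_*(u, Ω)` is an infimum over the empty set.
-/

open scoped Convolution ENNReal
open ContinuousLinearMap (lsmul)

def stdBump (E : Type*) [NormedAddCommGroup E] [NormedSpace ℝ E] (i : ℕ) :
    ContDiffBump (0 : E) where
  rIn := 1 / ((i : ℝ) + 1) / 2
  rOut := 1 / ((i : ℝ) + 1)
  rIn_pos := half_pos Nat.one_div_pos_of_nat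
  rIn_lt_rOut := half_lt_self Nat.one_div_pos_of_nat

theorem ae_tendsto_stdBump_convolution {E : Type*} [NormedAddCommGroup E] [NormedSpace ℝ E]
    [FiniteDimensional ℝ E] [MeasurableSpace E] [BorelSpace E] {μ : Measure E}
    [μ.IsAddHaarMeasure] {w : E → ℝ} (hw : LocallyIntegrable w μ) :
    ∀ᵐ x ∂μ, Tendsto (fun i => ((stdBump E i).normed μ ⋆[lsmul ℝ ℝ, μ] w) x)
      atTop (𝓝 (w x)) :=
  ContDiffBump.ae_convolution_tendsto_right_of_locallyIntegrable (K := 2)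
    tendsto_one_div_add_atTop_nhds_zero_nat
    (Eventually.of_forall fun _ => (mul_div_cancel₀ _ two_ne_zero).ge) hw

section

variable {n : ℕ}

def WeakGradientVanishesOn (w : Rn n → ℝ) (U : Set (Rn n)) : Prop :=
  ∀ ψ : Rn n → ℝ, ContDiff ℝ 1 ψ → HasCompactSupport ψ → tsupport ψ ⊆ U →
    ∀ j : Fin n, ∫ x, fderiv ℝ ψ x (EuclideanSpace.single j (1 : ℝ)) * w x = 0

namespace WeakGradientVanishesOn

variable {w : Rn n → ℝ} {U : Set (Rn n)}

theorem hasFDerivAt_convolution_eq_zero (hw : WeakGradientVanishesOn w U)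
    (hwl : LocallyIntegrable w volume) (φ : ContDiffBump (0 : Rn n)) {x : Rn n}
    (hx : closedBall x φ.rOut ⊆ U) :
    HasFDerivAt (φ.normed volume ⋆[lsmul ℝ ℝ, volume] w) (0 : Rn n →L[ℝ] ℝ) x := by
  set ρ := φ.normed volume
  have hρ : ContDiff ℝ 1 ρ := φ.contDiff_normed
  have hρs : HasCompactSupport ρ := φ.hasCompactSupport_normed
  have hder := hρs.hasFDerivAt_convolution_right (lsmul ℝ ℝ).flip hwl hρ x
  rw [convolution_flip] at hder
  set D := (w ⋆[(lsmul ℝ ℝ).flip.precompR (Rn n), volume] fderiv ℝ ρ) x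
  suffices hD : ∀ j : Fin n, D (EuclideanSpace.single j 1) = 0 by
    have : D = 0 := ContinuousLinearMap.coe_injective <|
      (EuclideanSpace.basisFun (Fin n) ℝ).toBasis.ext (f₁ := (D : Rn n →ₗ[ℝ] ℝ))
        (f₂ := ((0 : Rn n →L[ℝ] ℝ) : Rn n →ₗ[ℝ] ℝ)) fun j => by simpa using hD j
    rwa [this] at hder
  intro j
  -- `∂_j (ρ ⋆ w) x = -∫ ∂_j ψ · w` for the test function `ψ = ρ (x - ·)`, supported in
  -- `closedBall x φ.rOut`
  set ψ : Rn n → ℝ := fun z => ρ (x - z)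
  have hψ : ContDiff ℝ 1 ψ := hρ.comp (contDiff_const.sub contDiff_id)
  have hψs : HasCompactSupport ψ := hρs.comp_homeomorph (Homeomorph.subLeft x)
  have hψU : tsupport ψ ⊆ U := by
    refine subset_trans (fun z hz => ?_) hx
    rw [show ψ = ρ ∘ Homeomorph.subLeft x from rfl, tsupport_comp_eq_preimage,
      φ.tsupport_normed_eq] at hz
    simpa [dist_comm, dist_eq_norm] using hz
  have hdψ : ∀ z, fderiv ℝ ψ z = - fderiv ℝ ρ (x - z) := fun z => by
    have := ((hρ.differentiable one_ne_zero (x - z)).hasFDerivAt.comp z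
      ((hasFDerivAt_id z).const_sub x)).fderiv
    simpa using! this
  have := hw ψ hψ hψs hψU j
  simp only [hdψ] at this
  rw [convolution_precompR_apply (hf := hwl) (hcg := hρs.fderiv ℝ)
    (hg := hρ.continuous_fderiv one_ne_zero)]
  simpa [convolution_def, integral_neg] using this

theorem convolution_eq_of_mem_ball {y : Rn n} {r : ℝ}
    (hw : WeakGradientVanishesOn w (ball y r)) (hwl : LocallyIntegrable w volume)
    (φ : ContDiffBump (0 : Rn n)) {x₁ x₂ : Rn n}
    (h₁ : x₁ ∈ ball y (r - φ.rOut)) (h₂ : x₂ ∈ ball y (r - φ.rOut)) :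
    (φ.normed volume ⋆[lsmul ℝ ℝ, volume] w) x₁ =
      (φ.normed volume ⋆[lsmul ℝ ℝ, volume] w) x₂ := by
  have hzero : ∀ x ∈ ball y (r - φ.rOut),
      HasFDerivAt (φ.normed volume ⋆[lsmul ℝ ℝ, volume] w) 0 x :=
    fun x hx => hw.hasFDerivAt_convolution_eq_zero hwl φ <|
      closedBall_subset_ball' (by rw [mem_ball] at hx; linarith)
  refine (convex_ball y _).is_const_of_fderivWithin_eq_zero
    (fun x hx => (hzero x hx).differentiableAt.differentiableWithinAt) (fun x hx => ?_) h₁ h₂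
  rw [fderivWithin_of_isOpen isOpen_ball hx, (hzero x hx).fderiv]

theorem exists_ae_eq_const_ball {y : Rn n} {r : ℝ} (hw : WeakGradientVanishesOn w (ball y r))
    (hwl : LocallyIntegrable w volume) :
    ∃ c, ∀ᵐ x ∂volume.restrict (ball y r), w x = c := by
  set m := fun i => (stdBump (Rn n) i).normed volume ⋆[lsmul ℝ ℝ, volume] w
  have hlim : ∀ᵐ x ∂volume.restrict (ball y r),
      x ∈ ball y r ∧ Tendsto (fun i => m i x) atTop (𝓝 (w x)) :=
    (ae_restrict_mem measurableSet_ball).and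
      (ae_restrict_of_ae (ae_tendsto_stdBump_convolution hwl))
  rcases eq_or_ne (volume.restrict (ball y r)) 0 with h0 | h0
  · exact ⟨0, by simp [h0]⟩
  have := ae_neBot.2 h0
  obtain ⟨x₀, hx₀, hlim₀⟩ := hlim.exists
  refine ⟨w x₀, hlim.mono fun x ⟨hx, hlimx⟩ => tendsto_nhds_unique hlimx (hlim₀.congr' ?_)⟩
  have hsmall : ∀ᶠ i in atTop, (stdBump (Rn n) i).rOut < min (r - dist x₀ y) (r - dist x y) :=
    tendsto_one_div_add_atTop_nhds_zero_nat.eventually <| eventually_lt_nhds <|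
      lt_min (sub_pos.2 (mem_ball.1 hx₀)) (sub_pos.2 (mem_ball.1 hx))
  filter_upwards [hsmall] with i hi
  refine hw.convolution_eq_of_mem_ball hwl _ ?_ ?_ <;> rw [mem_ball]
  · linarith [min_le_left (r - dist x₀ y) (r - dist x y)]
  · linarith [min_le_right (r - dist x₀ y) (r - dist x y)]

end WeakGradientVanishesOn

namespace IsBV

variable {N : ℕ} {Ω U : Set (Rn n)} {μ : Measure (Rn n)} {v : Rn n → RNs N}
  {g : Rn n → Mat N n} {hg : Integrable g μ}

theorem weakGradientVanishesOn_indicator (hv : IsBV Ω v ⟨μ, g, hg⟩) (hΩ : MeasurableSet Ω)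
    (hUΩ : U ⊆ Ω) (hμU : μ U = 0) (i : Fin N) :
    WeakGradientVanishesOn (Ω.indicator fun x => v x i) U := by
  intro ψ hψ hψs hψU j
  have hψμ : ∀ᵐ x ∂μ, ψ x = 0 := measure_mono_null (subset_tsupport ψ |>.trans hψU) hμU
  rw [← funext fun x =>
      indicator_mul_right Ω (fun x => fderiv ℝ ψ x (EuclideanSpace.single j 1)) _,
    integral_indicator hΩ, hv.2.2 ψ hψ hψs (hψU.trans hUΩ) i j, neg_eq_zero]
  exact integral_eq_zero_of_ae (hψμ.mono fun x hx => by simp [hx])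

theorem exists_ae_eq_const_ball (hv : IsBV Ω v ⟨μ, g, hg⟩) (hΩ : MeasurableSet Ω) {y : Rn n}
    {r : ℝ} (hball : ball y r ⊆ Ω) (hμB : μ (ball y r) = 0) :
    ∃ c : RNs N, ∀ᵐ x ∂volume.restrict (ball y r), v x = c := by
  have hcomp (i : Fin N) :
      ∃ c : ℝ, ∀ᵐ x ∂volume.restrict (ball y r), Ω.indicator (fun x => v x i) x = c := by
    have hvi : IntegrableOn (fun x => v x i) Ω :=
      (EuclideanSpace.proj i : RNs N →L[ℝ] ℝ).integrable_comp hv.1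
    exact (hv.weakGradientVanishesOn_indicator hΩ hball hμB i).exists_ae_eq_const_ball
      (hvi.integrable_indicator hΩ).locallyIntegrable
  choose c hc using hcomp
  refine ⟨WithLp.toLp 2 c, ?_⟩
  filter_upwards [ae_all_iff.2 hc, ae_restrict_mem measurableSet_ball] with x hx hxB
  ext i
  simpa [indicator_of_mem (hball hxB)] using hx i

end IsBV

theorem dist_mul_measureReal_le_setIntegral {α E : Type*} [MeasurableSpace α]
    [NormedAddCommGroup E] {μ : Measure α} {s : Set α} (hs : MeasurableSet s) (hμs : μ s ≠ ∞)
    {f u : α → E} {c a : E} {ε : ℝ} (hf : ∀ᵐ x ∂μ.restrict s, f x = c)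
    (hu : ∀ x ∈ s, dist (u x) a ≤ ε) (hint : IntegrableOn (fun x => ‖f x - u x‖) s μ) :
    dist c a * μ.real s ≤ (∫ x in s, ‖f x - u x‖ ∂μ) + ε * μ.real s := by
  have hε : IntegrableOn (fun _ => ε) s μ := integrableOn_const hμs
  calc dist c a * μ.real s = ∫ _x in s, dist c a ∂μ := by
        rw [setIntegral_const, smul_eq_mul, mul_comm]
    _ ≤ ∫ x in s, (‖f x - u x‖ + ε) ∂μ := by
      refine integral_mono_ae (integrableOn_const hμs) (hint.add hε) ?_
      filter_upwards [hf, ae_restrict_mem hs] with x hfx hx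
      calc dist c a ≤ dist c (u x) + dist (u x) a := dist_triangle _ _ _
        _ ≤ ‖f x - u x‖ + ε := by rw [← hfx, dist_eq_norm]; gcongr; exact hu x hx
    _ = (∫ x in s, ‖f x - u x‖ ∂μ) + ε * μ.real s := by
      rw [integral_add hint hε, setIntegral_const, smul_eq_mul, mul_comm]

theorem tendsto_of_ae_eq_const_of_tendsto_setIntegral {E : Type*} [NormedAddCommGroup E]
    {U : Set (Rn n)} (hU : IsOpen U) {u : Rn n → E} {x₀ : Rn n} (hx₀ : x₀ ∈ U)
    (hu : ContinuousAt u x₀) {v : ℕ → Rn n → E} {c : ℕ → E}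
    (hvc : ∀ j, ∀ᵐ x ∂volume.restrict U, v j x = c j)
    (hint : ∀ j, IntegrableOn (fun x => ‖v j x - u x‖) U)
    (hlim : Tendsto (fun j => ∫ x in U, ‖v j x - u x‖) atTop (𝓝 0)) :
    Tendsto c atTop (𝓝 (u x₀)) := by
  rw [Metric.tendsto_atTop]
  intro ε hε
  obtain ⟨s, hs, hsU⟩ : ∃ s > 0, ball x₀ s ⊆ U ∩ u ⁻¹' closedBall (u x₀) (ε / 2) :=
    Metric.mem_nhds_iff.1 <|
      inter_mem (hU.mem_nhds hx₀) (hu (closedBall_mem_nhds _ (half_pos hε)))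
  have hsU' : ball x₀ s ⊆ U := hsU.trans inter_subset_left
  have hV : 0 < volume.real (ball x₀ s) :=
    ENNReal.toReal_pos (measure_ball_pos volume x₀ hs).ne' measure_ball_lt_top.ne
  obtain ⟨N, hN⟩ := eventually_atTop.1 <|
    hlim.eventually (gt_mem_nhds (mul_pos (half_pos hε) hV))
  refine ⟨N, fun j hj => lt_of_mul_lt_mul_right ?_ hV.le⟩
  have hball := dist_mul_measureReal_le_setIntegral measurableSet_ball measure_ball_lt_top.ne
    (ae_restrict_of_ae_restrict_of_subset hsU' (hvc j)) (fun x hx => (hsU hx).2)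
    ((hint j).mono_set hsU')
  have hmono : ∫ x in ball x₀ s, ‖v j x - u x‖ ≤ ∫ x in U, ‖v j x - u x‖ :=
    setIntegral_mono_set (hint j) (ae_of_all _ fun _ => norm_nonneg _) hsU'.eventuallyLE
  linarith [hN j hj]

theorem not_exists_isBV_tendsto_of_measure_ball_eq_zero {N : ℕ} {Ω : Set (Rn n)}
    (hΩ : MeasurableSet Ω) {μ : Measure (Rn n)} {y : Rn n} {r : ℝ} (hball : ball y r ⊆ Ω)
    (hμB : μ (ball y r) = 0) {u : Rn n → RNs N} (hu : Continuous u) (huΩ : IntegrableOn u Ω)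
    (hnc : ¬ ∀ x ∈ ball y r, ∀ x' ∈ ball y r, u x = u x') :
    ¬ ∃ (v : ℕ → Rn n → RNs N) (g : ℕ → Rn n → Mat N n),
      (∀ j, ∃ h : Integrable (g j) μ, IsBV Ω (v j) ⟨μ, g j, h⟩) ∧
      Tendsto (fun j => ∫ x in Ω, ‖v j x - u x‖) atTop (𝓝 0) := by
  rintro ⟨v, g, hv, hlim⟩
  choose hg hv using hv
  choose c hc using fun j => (hv j).exists_ae_eq_const_ball hΩ hball hμB
  have hint : ∀ j, IntegrableOn (fun x => ‖v j x - u x‖) Ω := fun j => ((hv j).1.sub huΩ).norm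
  have hlimB : Tendsto (fun j => ∫ x in ball y r, ‖v j x - u x‖) atTop (𝓝 0) :=
    squeeze_zero (fun _ => integral_nonneg fun _ => norm_nonneg _)
      (fun j => setIntegral_mono_set (hint j) (ae_of_all _ fun _ => norm_nonneg _)
        hball.eventuallyLE) hlim
  have hc_lim : ∀ x ∈ ball y r, Tendsto c atTop (𝓝 (u x)) := fun x hx =>
    tendsto_of_ae_eq_const_of_tendsto_setIntegral isOpen_ball hx hu.continuousAt hc
      (fun j => (hint j).mono_set hball) hlimB
  exact hnc fun x hx x' hx' => tendsto_nhds_unique (hc_lim x hx) (hc_lim x' hx')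

theorem relaxed_eq_top_of_not_exists {N : ℕ} {Ω : Set (Rn n)} {μ : Measure (Rn n)}
    {F : Mat N n → ℝ} {u : Rn n → RNs N}
    (h : ¬ ∃ (v : ℕ → Rn n → RNs N) (g : ℕ → Rn n → Mat N n),
      (∀ j, ∃ h : Integrable (g j) μ, IsBV Ω (v j) ⟨μ, g j, h⟩) ∧
      Tendsto (fun j => ∫ x in Ω, ‖v j x - u x‖) atTop (𝓝 0)) :
    relaxed Ω μ F u = ⊤ := by
  simp only [relaxed, iInf_eq_top]
  exact fun v g hv hlim => (h ⟨v, g, hv, hlim⟩).elim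

end

theorem no_approximation_of_vanishing_mu_general {n : ℕ} (Ω : Set (Rn n)) (hΩo : IsOpen Ω)
    (μ : Measure (Rn n))
    (y : Rn n) (r : ℝ) (hball : Metric.ball y r ⊆ Ω)
    (hμB : μ (Metric.ball y r) = 0) :
    (∀ (v : Rn n → RNs 1) (g : Rn n → Mat 1 n) (h : Integrable g μ),
      IsBV Ω v (⟨μ, g, h⟩ : VMeas n (Mat 1 n)) →
        (VMeas.tv ⟨μ, g, h⟩ (Metric.ball y r) = 0 ∧
          ∃ c : RNs 1, ∀ᵐ x ∂(volume.restrict (Metric.ball y r)), v x = c)) ∧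
    ∀ u : Rn n → RNs 1, ContDiff ℝ 1 u → HasCompactSupport u →
      tsupport u ⊆ Metric.ball y r →
      (¬ ∀ x ∈ Metric.ball y r, ∀ x' ∈ Metric.ball y r, u x = u x') →
      (¬ ∃ (v : ℕ → Rn n → RNs 1) (g : ℕ → Rn n → Mat 1 n),
          (∀ j, ∃ h : Integrable (g j) μ, IsBV Ω (v j) ⟨μ, g j, h⟩) ∧
          Tendsto (fun j => ∫ x in Ω, ‖v j x - u x‖ ∂volume) atTop (𝓝 0)) ∧
      ∀ F : Mat 1 n → ℝ, relaxed Ω μ F u = ⊤ := by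
  refine ⟨fun v g h hv => ⟨withDensity_absolutelyContinuous _ _ hμB,
    hv.exists_ae_eq_const_ball hΩo.measurableSet hball hμB⟩, fun u hu hus _ hnc => ?_⟩
  have hno := not_exists_isBV_tendsto_of_measure_ball_eq_zero hΩo.measurableSet hball hμB
    hu.continuous (hu.continuous.integrable_of_hasCompactSupport hus).integrableOn hnc
  exact ⟨hno, fun _ => relaxed_eq_top_of_not_exists hno⟩

/-- **Example: failure of approximation when `ℒ^n ≪ μ` fails** (Example 3.8): if `μ` vanishes
on an open ball `B = B(y,r) ⊆ Ω`, then every `v ∈ W^{1,1}_μ(Ω)` has `|Dv|(B) = 0` and is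
`ℒ^n`-a.e. constant on `B`; consequently, for a nonconstant `u ∈ C¹_c(B)` there is no sequence
in `W^{1,1}_μ(Ω)` converging to `u` in `L¹(Ω)`, and `F_*(u,Ω) = +∞` for any integrand `F`. -/
theorem no_approximation_of_vanishing_mu {n : ℕ} (Ω : Set (Rn n)) (hΩo : IsOpen Ω)
    (hΩb : Bornology.IsBounded Ω)
    (μ : Measure (Rn n)) [IsFiniteMeasure μ] (hμΩ : μ Ωᶜ = 0)
    (y : Rn n) (r : ℝ) (hr : 0 < r) (hball : Metric.ball y r ⊆ Ω)
    (hμB : μ (Metric.ball y r) = 0) :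
    (∀ (v : Rn n → RNs 1) (g : Rn n → Mat 1 n) (h : Integrable g μ),
      IsBV Ω v (⟨μ, g, h⟩ : VMeas n (Mat 1 n)) →
        (VMeas.tv ⟨μ, g, h⟩ (Metric.ball y r) = 0 ∧
          ∃ c : RNs 1, ∀ᵐ x ∂(volume.restrict (Metric.ball y r)), v x = c)) ∧
    ∀ u : Rn n → RNs 1, ContDiff ℝ 1 u → HasCompactSupport u →
      tsupport u ⊆ Metric.ball y r →
      (¬ ∀ x ∈ Metric.ball y r, ∀ x' ∈ Metric.ball y r, u x = u x') →
      (¬ ∃ (v : ℕ → Rn n → RNs 1) (g : ℕ → Rn n → Mat 1 n),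
          (∀ j, ∃ h : Integrable (g j) μ, IsBV Ω (v j) ⟨μ, g j, h⟩) ∧
          Tendsto (fun j => ∫ x in Ω, ‖v j x - u x‖ ∂volume) atTop (𝓝 0)) ∧
      ∀ F : Mat 1 n → ℝ, relaxed Ω μ F u = ⊤ :=
  no_approximation_of_vanishing_mu_general Ω hΩo μ y r hball hμB

end
end

section
/- Let Ω ⊂ ℝ^n be a bounded open set and let f ∈ E(Ω;ℝ^l), with \overline{Tf} denoting the bounded continuous extension of Tf to the closure of Ω×𝔹^l. Then for every x in the closure of Ω and every A ∈ ℝ^l, the limit f^∞(x,A) := lim f(x',tA')/t (as x'→x, A'→A, t→∞) exists and is finite; f^∞(x,A) = \overline{Tf}(x,A) for all A in the unit sphere ∂𝔹^l; and f^∞ is positively 1-homogeneous in A, i.e. f^∞(x,sA) = s f^∞(x,A) for all s ≥ 0. -/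
open MeasureTheory Filter Topology Metric Set

noncomputable section

/-!
Write `d = t⁻¹ + ‖A‖`. Since `1 - ‖A / d‖ = 1 / (d t)`, the definition of `Tf` gives the exact
identity `f(x, tA) / t = d · G(x, A / d)` with `A / d` in the open unit ball. As `x' → x`,
`A' → A` and `t → ∞` we have `d → ‖A‖`, so by continuity of `G` the quotient tends to
`‖A‖ · G(x, A / ‖A‖)` when `A ≠ 0`, and by boundedness of `G` it tends to `0` when `A = 0`.
That limit is positively 1-homogeneous in `A` and equals `G` on the unit sphere.
-/

section RecessionFunction

variable {X E : Type*} [NormedAddCommGroup E] [NormedSpace ℝ E]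

lemma norm_inv_norm_smul_le_one (A : E) : ‖‖A‖⁻¹ • A‖ ≤ 1 := by
  rcases eq_or_ne A 0 with rfl | hA
  · simp
  · rw [norm_smul, norm_inv, norm_norm, inv_mul_cancel₀ (norm_ne_zero_iff.2 hA)]

def homogeneousExtension (g : X × E → ℝ) (p : X × E) : ℝ := ‖p.2‖ * g (p.1, ‖p.2‖⁻¹ • p.2)

lemma homogeneousExtension_of_norm_eq_one (g : X × E → ℝ) (x : X) {A : E} (hA : ‖A‖ = 1) :
    homogeneousExtension g (x, A) = g (x, A) := by
  simp [homogeneousExtension, hA]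

lemma homogeneousExtension_smul (g : X × E → ℝ) (x : X) (A : E) {s : ℝ} (hs : 0 ≤ s) :
    homogeneousExtension g (x, s • A) = s * homogeneousExtension g (x, A) := by
  rcases hs.eq_or_lt with rfl | hs
  · simp [homogeneousExtension]
  have hsA : (s * ‖A‖)⁻¹ • s • A = ‖A‖⁻¹ • A := by
    rw [smul_smul, mul_inv_rev, inv_mul_cancel_right₀ hs.ne']
  simp only [homogeneousExtension, norm_smul, Real.norm_of_nonneg hs.le, hsA]
  ring

lemma tendsto_mul_apply_inv_smul [TopologicalSpace X] {α : Type*} {l : Filter α}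
    {g : X × E → ℝ} {S : Set (X × E)} {M : ℝ} (hg : ContinuousOn g S)
    (hM : ∀ p ∈ S, |g p| ≤ M) {x : α → X} {B : α → E} {d : α → ℝ} {x₀ : X} {A : E}
    (hx : Tendsto x l (𝓝 x₀)) (hB : Tendsto B l (𝓝 A)) (hd : Tendsto d l (𝓝 ‖A‖))
    (hS : ∀ᶠ a in l, (x a, (d a)⁻¹ • B a) ∈ S) (hA : (x₀, ‖A‖⁻¹ • A) ∈ S) :
    Tendsto (fun a => d a * g (x a, (d a)⁻¹ • B a)) l (𝓝 (homogeneousExtension g (x₀, A))) := by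
  rcases eq_or_ne A 0 with rfl | hA0
  · rw [norm_zero] at hd
    simpa [homogeneousExtension] using hd.zero_mul_isBoundedUnder_le
      ⟨M, eventually_map.2 (hS.mono fun a ha => hM _ ha)⟩
  · have hp : Tendsto (fun a => (x a, (d a)⁻¹ • B a)) l (𝓝[S] (x₀, ‖A‖⁻¹ • A)) :=
      tendsto_nhdsWithin_iff.2 ⟨hx.prodMk_nhds ((hd.inv₀ (norm_ne_zero_iff.2 hA0)).smul hB), hS⟩
    exact hd.mul ((hg _ hA).tendsto.comp hp)

lemma norm_inv_add_norm_smul_lt_one (A : E) {t : ℝ} (ht : 0 < t) :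
    ‖(t⁻¹ + ‖A‖)⁻¹ • A‖ < 1 := by
  have hd : 0 < t⁻¹ + ‖A‖ := by positivity
  rw [norm_smul, Real.norm_of_nonneg (inv_nonneg.2 hd.le), inv_mul_lt_one₀ hd]
  exact lt_add_of_pos_left _ (inv_pos.2 ht)

lemma div_eq_mul_of_transform {f g : E → ℝ}
    (hg : ∀ A ∈ ball (0 : E) 1, g A = (1 - ‖A‖) * f ((1 - ‖A‖)⁻¹ • A)) (A : E) {t : ℝ}
    (ht : 0 < t) : f (t • A) / t = (t⁻¹ + ‖A‖) * g ((t⁻¹ + ‖A‖)⁻¹ • A) := by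
  set d := t⁻¹ + ‖A‖ with hd_def
  have hd : 0 < d := by positivity
  have hone : 1 - ‖d⁻¹ • A‖ = (d * t)⁻¹ := by
    rw [norm_smul, Real.norm_of_nonneg (inv_nonneg.2 hd.le)]
    field_simp
    rw [hd_def, add_sub_cancel_right, inv_mul_cancel₀ ht.ne']
  have hscale : (d * t)⁻¹⁻¹ • d⁻¹ • A = t • A := by
    rw [inv_inv, smul_smul, mul_comm d, mul_assoc, mul_inv_cancel₀ hd.ne', mul_one]
  rw [hg _ (mem_ball_zero_iff.2 (norm_inv_add_norm_smul_lt_one A ht)), hone, hscale]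
  field_simp

theorem IsTExtension.isRecessionOn {n : ℕ} {Ω : Set (Rn n)} {f G : Rn n × E → ℝ}
    (h : IsTExtension Ω f G) : IsRecessionOn Ω f (homogeneousExtension G) := by
  obtain ⟨hGc, ⟨M, hM⟩, hTf⟩ := h
  intro x hx A
  set l := ((𝓝[Ω] x) ×ˢ (𝓝 A)) ×ˢ (atTop : Filter ℝ)
  have hΩ : ∀ᶠ q in l, q.1.1 ∈ Ω := (eventually_mem_nhdsWithin.prod_inl _).prod_inl _
  have hpos : ∀ᶠ q in l, 0 < q.2 := (eventually_gt_atTop 0).prod_inr _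
  have hd : Tendsto (fun q : (Rn n × E) × ℝ => q.2⁻¹ + ‖q.1.2‖) l (𝓝 ‖A‖) := by
    simpa using (tendsto_inv_atTop_zero.comp tendsto_snd).add (tendsto_snd.comp tendsto_fst).norm
  refine (tendsto_mul_apply_inv_smul hGc hM
    ((tendsto_fst.comp tendsto_fst).mono_right nhdsWithin_le_nhds) (tendsto_snd.comp tendsto_fst)
    hd ?_ ⟨hx, mem_closedBall_zero_iff.2 (norm_inv_norm_smul_le_one A)⟩).congr' ?_
  · filter_upwards [hΩ, hpos] with q hq ht
    exact ⟨subset_closure hq, mem_closedBall_zero_iff.2 (norm_inv_add_norm_smul_lt_one _ ht).le⟩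
  · filter_upwards [hΩ, hpos] with q hq ht
    exact (div_eq_mul_of_transform (f := fun B => f (q.1.1, B)) (hTf _ hq) _ ht).symm

end RecessionFunction

theorem recession_of_memE_general {n l : ℕ} (Ω : Set (Rn n))
    (f G : Rn n × RNs l → ℝ)
    (hext : IsTExtension Ω f G) :
    ∃ fi : Rn n × RNs l → ℝ,
      IsRecessionOn Ω f fi ∧
      (∀ x ∈ closure Ω, ∀ A : RNs l, ‖A‖ = 1 → fi (x, A) = G (x, A)) ∧
      (∀ x ∈ closure Ω, ∀ A : RNs l, ∀ s : ℝ, 0 ≤ s → fi (x, s • A) = s * fi (x, A)) :=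
  ⟨homogeneousExtension G, hext.isRecessionOn,
    fun x _ _ hA => homogeneousExtension_of_norm_eq_one G x hA,
    fun x _ A _ hs => homogeneousExtension_smul G x A hs⟩

/-- **Existence and properties of the recession function for `f ∈ E(Ω;ℝ^l)`**: if `Tf` has a
bounded continuous extension `G` to `cl(Ω × 𝔹^l)`, then for every `x ∈ cl(Ω)` and `A ∈ ℝ^l`
the limit `f^∞(x,A) = lim f(x',tA')/t` (as `x'→x`, `A'→A`, `t→∞`) exists and is finite; it
agrees with `G` on `cl(Ω) × ∂𝔹^l`; and it is positively 1-homogeneous in `A`. -/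
theorem recession_of_memE {n l : ℕ} (Ω : Set (Rn n)) (hΩo : IsOpen Ω)
    (hΩb : Bornology.IsBounded Ω)
    (f G : Rn n × RNs l → ℝ)
    (hf : ContinuousOn f (Ω ×ˢ (Set.univ : Set (RNs l))))
    (hext : IsTExtension Ω f G) :
    ∃ fi : Rn n × RNs l → ℝ,
      IsRecessionOn Ω f fi ∧
      (∀ x ∈ closure Ω, ∀ A : RNs l, ‖A‖ = 1 → fi (x, A) = G (x, A)) ∧
      (∀ x ∈ closure Ω, ∀ A : RNs l, ∀ s : ℝ, 0 ≤ s → fi (x, s • A) = s * fi (x, A)) :=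
  recession_of_memE_general Ω f G hext

end
end
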